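/- arXiv:1204.4033 — 6 statements merged into one kernel-verified Lean document; each statement's English description precedes it below -/
import Mathlib

section
/- With q̂ = q^(p-1) for q a primitive root mod p^2, define c_k(u,v) = ∏_{i=0}^{k-1} (v − q̂^i u)/(q̂^k − q̂^i) in ℚ_p[u,v] and f_k = p^(ν_p(k!)) · c_k. Then f_k lies in the subring ℤ_p[u/p, v/p] of ℚ_p[u,v]. -/
/-!
Write `Q = q^(p-1)`. Since `q` is primitive modulo `p²`, `Q ≡ 1 mod p` but `Q ≢ 1 mod p²`, so
lifting the exponent (`p` is odd) gives `ν_p(Q^k - Q^i) = ν_p(Q^(k-i) - 1) = 1 + ν_p(k - i)` for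
`i < k`. Summing over `i < k`, the denominator of `c_k` has valuation `k + ν_p(k!)`, hence
`f_k = γ · N` with `ν_p(γ) = -k` and `N = ∏ (v - Q^i u) ∈ ℤ[u, v]` homogeneous of degree `k`.
-/

open MvPolynomial

/-- The polynomial `c_k(u,v) = ∏_{i=0}^{k-1} (v − q̂^i u)/(q̂^k − q̂^i)` in `ℚ_p[u,v]`,
with `u = X 0`, `v = X 1` and `q̂ = q^(p-1)`. -/
noncomputable def cpoly (p : ℕ) [Fact p.Prime] (q : ℤ) (k : ℕ) :
    MvPolynomial (Fin 2) ℚ_[p] :=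
  ∏ i ∈ Finset.range k,
    (C ((((q : ℚ_[p]) ^ (p - 1)) ^ k - ((q : ℚ_[p]) ^ (p - 1)) ^ i)⁻¹) *
      (X 1 - C (((q : ℚ_[p]) ^ (p - 1)) ^ i) * X 0))

/-- `f_k = p^(ν_p(k!)) · c_k`. -/
noncomputable def fpoly (p : ℕ) [Fact p.Prime] (q : ℤ) (k : ℕ) :
    MvPolynomial (Fin 2) ℚ_[p] :=
  C ((p : ℚ_[p]) ^ (padicValNat p (Nat.factorial k))) * cpoly p q k

open Finset

section General

variable {p : ℕ} [hp : Fact p.Prime]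

theorem Padic.valuation_prod {ι : Type*} (s : Finset ι) (f : ι → ℚ_[p]) (hf : ∀ i ∈ s, f i ≠ 0) :
    (∏ i ∈ s, f i).valuation = ∑ i ∈ s, (f i).valuation := by
  classical
  induction s using Finset.induction_on with
  | empty => simp
  | insert a s ha ih =>
    rw [prod_insert ha, sum_insert ha, Padic.valuation_mul (hf a (mem_insert_self a s))
        (prod_ne_zero_iff.mpr fun i hi => hf i (mem_insert_of_mem hi)),
      ih fun i hi => hf i (mem_insert_of_mem hi)]

theorem padicValInt_eq_emultiplicity {z : ℤ} (hz : z ≠ 0) :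
    (padicValInt p z : ℕ∞) = emultiplicity (p : ℤ) z := by
  rw [← Int.emultiplicity_natAbs, padicValInt, padicValNat_eq_emultiplicity (Int.natAbs_ne_zero.mpr hz)]

theorem padicValInt_eq_one {z : ℤ} (hdvd : (p : ℤ) ∣ z) (hsq : ¬(p : ℤ) ^ 2 ∣ z) :
    padicValInt p z = 1 := by
  have hz : z ≠ 0 := by rintro rfl; exact hsq (dvd_zero _)
  rw [← Nat.cast_inj (R := ℕ∞), padicValInt_eq_emultiplicity hz, Nat.cast_one]
  exact emultiplicity_eq_coe.mpr ⟨by simpa using hdvd, by simpa using hsq⟩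

theorem padicValInt.pow_sub_pow (hodd : Odd p) {x y : ℤ} (hxy : (p : ℤ) ∣ x - y)
    (hx : ¬(p : ℤ) ∣ x) {n : ℕ} (hn : n ≠ 0) (hne : x ^ n ≠ y ^ n) :
    padicValInt p (x ^ n - y ^ n) = padicValInt p (x - y) + padicValNat p n := by
  have hxy' : x ≠ y := by rintro rfl; exact hne rfl
  rw [← Nat.cast_inj (R := ℕ∞), Nat.cast_add, padicValInt_eq_emultiplicity (sub_ne_zero.mpr hne),
    padicValInt_eq_emultiplicity (sub_ne_zero.mpr hxy'), padicValNat_eq_emultiplicity hn]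
  exact Int.emultiplicity_pow_sub_pow hp.out hodd hxy hx n

theorem sum_range_padicValNat_sub (k : ℕ) :
    ∑ i ∈ range k, padicValNat p (k - i) = padicValNat p k.factorial := by
  induction k with
  | zero => simp
  | succ k ih =>
    rw [sum_range_succ', Nat.sub_zero, Nat.factorial_succ,
      padicValNat.mul k.succ_ne_zero k.factorial_ne_zero, ← ih]
    simp only [Nat.add_sub_add_right]
    exact add_comm _ _

theorem neg_degree_le_valuation_coeff_C_mul_map {σ : Type*} {P : MvPolynomial σ ℤ} {n : ℕ}
    (hP : P.IsHomogeneous n) {c : ℚ_[p]} (hc : -(n : ℤ) ≤ c.valuation) (m : σ →₀ ℕ) :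
    -(m.degree : ℤ) ≤ (coeff m (C c * map (Int.castRingHom ℚ_[p]) P)).valuation := by
  rw [coeff_C_mul, coeff_map, eq_intCast]
  rcases eq_or_ne (c * ((P.coeff m : ℤ) : ℚ_[p])) 0 with h | h
  · rw [h, Padic.valuation_zero]
    exact neg_nonpos.mpr (Nat.cast_nonneg _)
  · obtain ⟨hc0, hP0⟩ := mul_ne_zero_iff.mp h
    have hdeg : m.degree = n := by
      rw [Finsupp.degree_eq_weight_one]
      exact hP (Int.cast_ne_zero.mp hP0)
    rw [Padic.valuation_mul hc0 hP0, Padic.valuation_intCast, hdeg]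
    omega

theorem isHomogeneous_prod_X_sub_C_mul_X {R σ ι : Type*} [CommRing R] (s : Finset ι) (a : ι → R)
    (j l : σ) : (∏ i ∈ s, (X j - C (a i) * X l)).IsHomogeneous #s := by
  have h := IsHomogeneous.prod s (fun i => (X j - C (a i) * X l : MvPolynomial σ R)) (fun _ => 1)
    fun i _ => (isHomogeneous_X R j).sub (isHomogeneous_C_mul_X (a i) l)
  rwa [sum_const, smul_eq_mul, mul_one] at h

end General

section PowSubPow

variable {p : ℕ} [hp : Fact p.Prime] {Q : ℤ}

theorem padicValInt_pow_sub_pow_of_lt (hodd : Odd p) (hQ : 1 < Q) (hdvd : (p : ℤ) ∣ Q - 1)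
    (hsq : ¬(p : ℤ) ^ 2 ∣ Q - 1) {i k : ℕ} (hik : i < k) :
    padicValInt p (Q ^ k - Q ^ i) = 1 + padicValNat p (k - i) := by
  have hpQ : ¬(p : ℤ) ∣ Q := fun h =>
    (Nat.prime_iff_prime_int.mp hp.out).not_dvd_one (by simpa using dvd_sub h hdvd)
  have hpow : Q ^ (k - i) ≠ 1 ^ (k - i) := by
    rw [one_pow]; exact (one_lt_pow₀ hQ (by omega)).ne'
  have hsplit : Q ^ k - Q ^ i = Q ^ i * (Q ^ (k - i) - 1 ^ (k - i)) := by
    rw [one_pow, mul_sub, mul_one, ← pow_add, Nat.add_sub_cancel' hik.le]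
  rw [hsplit, padicValInt.mul (pow_ne_zero _ (by omega)) (sub_ne_zero.mpr hpow),
    padicValInt.eq_zero_of_not_dvd fun h => hpQ (Int.Prime.dvd_pow' hp.out h),
    padicValInt.pow_sub_pow hodd (by simpa using hdvd) hpQ (by omega) hpow,
    padicValInt_eq_one hdvd hsq, zero_add]

theorem valuation_pow_factorial_mul_inv_prod_pow_sub_pow (hodd : Odd p) (hQ : 1 < Q)
    (hdvd : (p : ℤ) ∣ Q - 1) (hsq : ¬(p : ℤ) ^ 2 ∣ Q - 1) (k : ℕ) :
    ((p : ℚ_[p]) ^ padicValNat p k.factorial *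
      (∏ i ∈ range k, ((Q ^ k - Q ^ i : ℤ) : ℚ_[p]))⁻¹).valuation = -k := by
  have hne : ∀ i ∈ range k, ((Q ^ k - Q ^ i : ℤ) : ℚ_[p]) ≠ 0 := fun i hi =>
    Int.cast_ne_zero.mpr (sub_ne_zero.mpr (pow_lt_pow_right₀ hQ (mem_range.mp hi)).ne')
  have hD : (∏ i ∈ range k, ((Q ^ k - Q ^ i : ℤ) : ℚ_[p])).valuation
      = k + padicValNat p k.factorial :=
    calc (∏ i ∈ range k, ((Q ^ k - Q ^ i : ℤ) : ℚ_[p])).valuation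
        = ∑ i ∈ range k, ((1 + padicValNat p (k - i) : ℕ) : ℤ) := by
          rw [Padic.valuation_prod _ _ hne]
          refine sum_congr rfl fun i hi => ?_
          rw [Padic.valuation_intCast,
            padicValInt_pow_sub_pow_of_lt hodd hQ hdvd hsq (mem_range.mp hi)]
      _ = k + padicValNat p k.factorial := by
          rw [← sum_range_padicValNat_sub]
          push_cast
          simp [sum_add_distrib]
  rw [Padic.valuation_mul (pow_ne_zero _ (Nat.cast_ne_zero.mpr hp.out.ne_zero))
      (inv_ne_zero (prod_ne_zero_iff.mpr hne)),
    Padic.valuation_inv, hD, Padic.valuation_pow, Padic.valuation_p]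
  ring

end PowSubPow

section PrimitiveRoot

variable {p : ℕ} [hp : Fact p.Prime] {q : ℤ}

theorem not_dvd_of_orderOf_eq (hq : orderOf (q : ZMod (p ^ 2)) = p * (p - 1)) : ¬(p : ℤ) ∣ q := by
  intro hpq
  have hunit : IsUnit (q : ZMod (p ^ 2)) :=
    (orderOf_pos_iff.mp (hq ▸ Nat.mul_pos hp.out.pos (Nat.sub_pos_of_lt hp.out.one_lt))).isUnit
  have hunit' := hunit.map (ZMod.castHom (dvd_pow_self p two_ne_zero) (ZMod p))
  rw [map_intCast, (ZMod.intCast_zmod_eq_zero_iff_dvd q p).mpr hpq] at hunit'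
  exact not_isUnit_zero hunit'

theorem not_sq_dvd_pow_sub_one_of_orderOf_eq (hq : orderOf (q : ZMod (p ^ 2)) = p * (p - 1)) :
    ¬(p : ℤ) ^ 2 ∣ q ^ (p - 1) - 1 := by
  intro h
  have hpow : (q : ZMod (p ^ 2)) ^ (p - 1) = 1 := by
    have := (ZMod.intCast_eq_intCast_iff_dvd_sub 1 (q ^ (p - 1)) (p ^ 2)).mpr (by exact_mod_cast h)
    push_cast at this
    exact this.symm
  have hle := Nat.le_of_dvd (Nat.sub_pos_of_lt hp.out.one_lt) (hq ▸ orderOf_dvd_of_pow_eq_one hpow)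
  have := Nat.mul_le_mul_right (p - 1) hp.out.two_le
  have := hp.out.two_le
  omega

theorem dvd_pow_sub_one_of_orderOf_eq (hq : orderOf (q : ZMod (p ^ 2)) = p * (p - 1)) :
    (p : ℤ) ∣ q ^ (p - 1) - 1 :=
  Int.prime_dvd_pow_sub_one hp.out
    ((Nat.prime_iff_prime_int.mp hp.out).coprime_iff_not_dvd.mpr (not_dvd_of_orderOf_eq hq)).symm

theorem one_lt_pow_sub_one_of_orderOf_eq (hodd : Odd p)
    (hq : orderOf (q : ZMod (p ^ 2)) = p * (p - 1)) : 1 < q ^ (p - 1) := by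
  have hpos : 0 < q ^ (p - 1) := (Nat.Odd.sub_odd hodd odd_one).pow_pos
    (by rintro rfl; exact not_dvd_of_orderOf_eq hq (dvd_zero _))
  have hne : q ^ (p - 1) ≠ 1 := fun h => not_sq_dvd_pow_sub_one_of_orderOf_eq hq (by simp [h])
  omega

end PrimitiveRoot

theorem fpoly_eq (p : ℕ) [Fact p.Prime] (q : ℤ) (k : ℕ) :
    fpoly p q k =
      C ((p : ℚ_[p]) ^ padicValNat p k.factorial *
          (∏ i ∈ range k, (((q ^ (p - 1)) ^ k - (q ^ (p - 1)) ^ i : ℤ) : ℚ_[p]))⁻¹) *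
        map (Int.castRingHom ℚ_[p]) (∏ i ∈ range k, (X 1 - C ((q ^ (p - 1)) ^ i) * X 0)) := by
  rw [fpoly, cpoly, prod_mul_distrib, ← map_prod C, Finset.prod_inv_distrib, ← mul_assoc, ← map_mul C]
  simp only [map_prod, map_sub, map_mul, map_X, map_C, Int.coe_castRingHom, Int.cast_sub,
    Int.cast_pow]

/-- `f_k` lies in the subring `ℤ_p[u/p, v/p]` of `ℚ_p[u,v]`, i.e. the
coefficient of `u^a v^b` in `f_k` has `p`-adic valuation at least `−(a+b)`. -/
theorem stmt1 (p : ℕ) [Fact p.Prime] (hodd : Odd p) (q : ℤ)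
    (hq : orderOf ((q : ZMod (p ^ 2))) = p * (p - 1)) (k : ℕ) :
    ∀ m : Fin 2 →₀ ℕ,
      -((m 0 : ℤ) + (m 1 : ℤ)) ≤ ((fpoly p q k).coeff m).valuation := by
  intro m
  have hhom := isHomogeneous_prod_X_sub_C_mul_X (range k) (fun i => (q ^ (p - 1)) ^ i) (1 : Fin 2) 0
  rw [card_range] at hhom
  have hdeg : m.degree = m 0 + m 1 := by
    rw [Finsupp.degree_eq_sum, Fin.sum_univ_two]
  rw [← Nat.cast_add, ← hdeg, fpoly_eq]
  refine neg_degree_le_valuation_coeff_C_mul_map hhom ?_ m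
  exact (valuation_pow_factorial_mul_inv_prod_pow_sub_pow hodd
    (one_lt_pow_sub_one_of_orderOf_eq hodd hq) (dvd_pow_sub_one_of_orderOf_eq hq)
    (not_sq_dvd_pow_sub_one_of_orderOf_eq hq) k).ge
end

section
/- Let f_k = p^(ν_p(k!)) ∏_{i=0}^{k-1} (v − q̂^i u)/(q̂^k − q̂^i) and let Ψ be the ℚ_p-algebra endomorphism of ℚ_p[u,v] with Ψ(u) = u, Ψ(v) = q̂v. Then for m ≥ 1, Ψ(f_m) = q̂^m f_m + p^(ν_p(m)) u f_{m-1}. -/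
/-!
Write `f_k = p^{ν_p(k!)} · N_k / D_k` with `N_k = ∏_{i<k} (v - a^i u)` and
`D_k = ∏_{i<k} (a^k - a^i)`, where `a = q̂`. Since `Ψ(v - a^{i+1} u) = a (v - a^i u)`, shifting the
index gives `Ψ(N_{m+1}) = a^m N_m (a v - u) = a^{m+1} N_{m+1} + a^m (a^{m+1} - 1) u N_m`, and
`D_{m+1} = a^m (a^{m+1} - 1) D_m` turns the second term into `u N_m / D_m`. The `p`-power prefactors
differ by `p^{ν_p(m)}`. The denominators are nonzero because `q̂` is an integer of absolute value
at least `2`: a primitive root modulo `p^2` is not `0` or `±1` once `p` is odd.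
-/

open MvPolynomial

/-- The `ℚ_p`-algebra endomorphism `Ψ` of `ℚ_p[u,v]` with `Ψ(u) = u`, `Ψ(v) = q̂·v`. -/
noncomputable def PsiMap (p : ℕ) [Fact p.Prime] (q : ℤ) :
    MvPolynomial (Fin 2) ℚ_[p] →ₐ[ℚ_[p]] MvPolynomial (Fin 2) ℚ_[p] :=
  MvPolynomial.aeval (fun i : Fin 2 =>
    if i = 0 then X 0 else C ((q : ℚ_[p]) ^ (p - 1)) * X 1)

open Finset Function

section QBinomial

variable {K : Type*} [Field K]

noncomputable def qBinomPoly (a : K) (k : ℕ) : MvPolynomial (Fin 2) K :=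
  ∏ i ∈ range k, (C ((a ^ k - a ^ i)⁻¹) * (X 1 - C (a ^ i) * X 0))

noncomputable def qBinomNum (a : K) (k : ℕ) : MvPolynomial (Fin 2) K :=
  ∏ i ∈ range k, (X 1 - C (a ^ i) * X 0)

def qBinomDen (a : K) (k : ℕ) : K :=
  ∏ i ∈ range k, (a ^ k - a ^ i)

theorem qBinomPoly_eq (a : K) (k : ℕ) :
    qBinomPoly a k = C (qBinomDen a k)⁻¹ * qBinomNum a k := by
  rw [qBinomPoly, qBinomNum, qBinomDen, prod_mul_distrib, ← prod_inv_distrib, map_prod]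

theorem qBinomDen_succ (a : K) (m : ℕ) :
    qBinomDen a (m + 1) = a ^ m * (a ^ (m + 1) - 1) * qBinomDen a m := by
  have hshift : ∀ i, a ^ (m + 1) - a ^ (i + 1) = a * (a ^ m - a ^ i) := fun i => by ring
  rw [qBinomDen, prod_range_succ', qBinomDen]
  simp_rw [hshift]
  rw [prod_mul_distrib, prod_const, card_range, pow_zero]
  ring

theorem qBinomDen_ne_zero {a : K} (ha : Injective (a ^ · : ℕ → K)) (k : ℕ) :
    qBinomDen a k ≠ 0 :=
  prod_ne_zero_iff.mpr fun _ hi =>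
    sub_ne_zero.mpr (ha.ne (mem_range.mp hi).ne')

variable {a : K} {φ : MvPolynomial (Fin 2) K →ₐ[K] MvPolynomial (Fin 2) K}

theorem map_qBinomNum_succ (hφ0 : φ (X 0) = X 0) (hφ1 : φ (X 1) = C a * X 1) (m : ℕ) :
    φ (qBinomNum a (m + 1)) =
      C (a ^ (m + 1)) * qBinomNum a (m + 1) +
        C (a ^ m * (a ^ (m + 1) - 1)) * X 0 * qBinomNum a m := by
  have hfactor : ∀ i, φ (X 1 - C (a ^ (i + 1)) * X 0) = C a * (X 1 - C (a ^ i) * X 0) := by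
    intro i
    simp only [map_sub, map_mul, algHom_C, algebraMap_eq, hφ0, hφ1, pow_succ]
    ring
  calc φ (qBinomNum a (m + 1))
      = φ (∏ i ∈ range m, (X 1 - C (a ^ (i + 1)) * X 0)) * φ (X 1 - C (a ^ 0) * X 0) := by
        rw [qBinomNum, prod_range_succ', map_mul]
    _ = (C a ^ m * qBinomNum a m) * (C a * X 1 - X 0) := by
        simp only [map_prod, hfactor, prod_mul_distrib, prod_const, card_range, qBinomNum,
          map_sub, hφ0, hφ1, pow_zero, C_1, one_mul]
    _ = _ := by
        simp only [qBinomNum, prod_range_succ, C_mul, C_pow, C_sub, C_1]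
        ring

theorem map_qBinomPoly_succ (hφ0 : φ (X 0) = X 0) (hφ1 : φ (X 1) = C a * X 1) (m : ℕ)
    (hD : qBinomDen a (m + 1) ≠ 0) :
    φ (qBinomPoly a (m + 1)) = C (a ^ (m + 1)) * qBinomPoly a (m + 1) + X 0 * qBinomPoly a m := by
  have hinv : (qBinomDen a m)⁻¹ = (qBinomDen a (m + 1))⁻¹ * (a ^ m * (a ^ (m + 1) - 1)) := by
    rw [qBinomDen_succ] at hD ⊢
    rw [mul_comm _ (qBinomDen a m), mul_inv, inv_mul_cancel_right₀ (left_ne_zero_of_mul hD)]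
  rw [qBinomPoly_eq, qBinomPoly_eq, map_mul, algHom_C, algebraMap_eq, map_qBinomNum_succ hφ0 hφ1,
    hinv]
  simp only [C_mul]
  ring

end QBinomial

theorem one_lt_natAbs_of_two_lt_orderOf {R : Type*} [Ring R] {q : ℤ}
    (h : 2 < orderOf (q : R)) : 1 < q.natAbs := by
  have : Nontrivial R := by
    by_contra hR
    have := not_nontrivial_iff_subsingleton.mp hR
    rw [Subsingleton.elim (q : R) 1, orderOf_one] at h
    omega
  by_contra! hq
  obtain rfl | rfl | rfl : q = -1 ∨ q = 0 ∨ q = 1 := by omega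
  · rw [Int.cast_neg, Int.cast_one, orderOf_neg_one] at h
    split_ifs at h <;> omega
  all_goals simp at h

theorem intCast_pow_injective {K : Type*} [Ring K] [CharZero K] {Q : ℤ} (hQ : 1 < Q.natAbs) :
    Injective ((Q : K) ^ · : ℕ → K) :=
  fun i j h => Int.pow_right_injective hQ (Int.cast_injective (α := K) (by push_cast; exact h))

/-- for `m ≥ 1`, `Ψ(f_m) = q̂^m f_m + p^(ν_p(m)) u f_{m-1}`. -/
theorem stmt3 (p : ℕ) [Fact p.Prime] (hodd : Odd p) (q : ℤ)
    (hq : orderOf ((q : ZMod (p ^ 2))) = p * (p - 1)) (m : ℕ) (hm : 1 ≤ m) :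
    PsiMap p q (fpoly p q m) =
      C (((q : ℚ_[p]) ^ (p - 1)) ^ m) * fpoly p q m +
        C ((p : ℚ_[p]) ^ (padicValNat p m)) * X 0 * fpoly p q (m - 1) := by
  obtain ⟨m, rfl⟩ : ∃ m', m = m' + 1 := ⟨m - 1, by omega⟩
  have hp3 : 3 ≤ p := by
    obtain ⟨k, hk⟩ := hodd
    have := (Fact.out : p.Prime).two_le
    omega
  have hq_abs : 1 < q.natAbs := one_lt_natAbs_of_two_lt_orderOf (by
    rw [hq]; have := Nat.mul_le_mul hp3 (show 2 ≤ p - 1 by omega); omega)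
  have hinj : Injective (((q : ℚ_[p]) ^ (p - 1)) ^ · : ℕ → ℚ_[p]) := by
    have hQ : 1 < (q ^ (p - 1)).natAbs := by
      rw [Int.natAbs_pow]; exact Nat.one_lt_pow (by omega) hq_abs
    simpa using intCast_pow_injective (K := ℚ_[p]) hQ
  have hΨ : PsiMap p q (cpoly p q (m + 1)) =
      C (((q : ℚ_[p]) ^ (p - 1)) ^ (m + 1)) * cpoly p q (m + 1) + X 0 * cpoly p q m :=
    map_qBinomPoly_succ (by simp [PsiMap]) (by simp [PsiMap]) m (qBinomDen_ne_zero hinj _)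
  have hval : padicValNat p (m + 1).factorial = padicValNat p (m + 1) + padicValNat p m.factorial :=
    padicValNat.mul (by omega) (Nat.factorial_ne_zero m)
  rw [fpoly, fpoly, Nat.add_sub_cancel, map_mul, algHom_C, algebraMap_eq, hΨ, hval, pow_add, C_mul]
  ring
end

section
/- With R as above and X_n = ∏_{i=0}^{n-1}(R − q̂^i I), for every n ≥ 1, s ≥ 1 and 0 ≤ c ≤ n, the (s, s+c)-entry of X_n equals ∑_{i=c}^n (−1)^(n−i) q̂^(C(n−i,2) + (s−1)(i−c)) [n choose i]_{q̂} [i choose i−c]_{q̂}; moreover (X_n)_{s,s+c} = 0 if c < 0 or c > n. -/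
/-- The Gaussian (`q`-binomial) coefficient `[n choose i]_q`. -/
def gaussBinom {R : Type*} [CommRing R] (q : R) : ℕ → ℕ → R
  | _, 0 => 1
  | 0, _ + 1 => 0
  | n + 1, i + 1 => gaussBinom q n i + q ^ (i + 1) * gaussBinom q n (i + 1)

/-- Product of ℕ×ℕ upper triangular matrices. -/
def utMul {R : Type*} [Semiring R] (A B : ℕ → ℕ → R) : ℕ → ℕ → R :=
  fun i j => ∑ k ∈ Finset.Icc i j, A i k * B k j

/-- The matrix `R` with `R_{i,i} = q̂^i`, `R_{i,i+1} = 1` (indices from 0). -/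
def Rmat {R : Type*} [Semiring R] (qh : R) : ℕ → ℕ → R :=
  fun i j => if i = j then qh ^ i else if j = i + 1 then 1 else 0

/-- `X_n = (R − I)(R − q̂ I)⋯(R − q̂^(n−1) I)`. -/
def Xmat {R : Type*} [Ring R] (qh : R) : ℕ → ℕ → ℕ → R
  | 0 => fun i j => if i = j then 1 else 0
  | n + 1 => utMul (Xmat qh n) (fun i j => Rmat qh i j - if i = j then qh ^ n else 0)

/-
`utMul` is the product of the incidence algebra of `(ℕ, ≤)`, so `X_n` is the image of
`∏_{k<n} (X - q̂^k)` under `X ↦ R`. By Cauchy's `q`-binomial theorem this polynomial is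
`∑_i (-1)^(n-i) q̂^C(n-i,2) [n choose i] X^i`. Writing `R^(i+1) = R * R^i`, the recursion
`[i+1 choose k+1] = [i choose k] + q̂^(k+1) [i choose k+1]` gives
`(R^i)_{s,s+c} = q̂^(s(i-c)) [i choose i-c]` for `c ≤ i`, while `R^i` vanishes beyond its
`i`-th superdiagonal.
-/

open Finset Polynomial

section GaussBinom
variable {S : Type*} [CommRing S] (q : S)

@[simp] lemma gaussBinom_zero_right (n : ℕ) : gaussBinom q n 0 = 1 := by cases n <;> rfl

lemma gaussBinom_succ_succ (n i : ℕ) :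
    gaussBinom q (n + 1) (i + 1) = gaussBinom q n i + q ^ (i + 1) * gaussBinom q n (i + 1) :=
  rfl

lemma gaussBinom_eq_zero_of_lt {n i : ℕ} (h : n < i) : gaussBinom q n i = 0 := by
  induction n generalizing i with
  | zero => obtain ⟨i, rfl⟩ := Nat.exists_eq_add_one.2 h; rfl
  | succ n ih =>
    obtain ⟨i, rfl⟩ := Nat.exists_eq_add_one.2 (n.succ_pos.trans h)
    rw [gaussBinom_succ_succ, ih (by omega), ih (by omega), mul_zero, add_zero]

@[simp] lemma gaussBinom_self (n : ℕ) : gaussBinom q n n = 1 := by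
  induction n with
  | zero => rfl
  | succ n ih => rw [gaussBinom_succ_succ, ih, gaussBinom_eq_zero_of_lt q n.lt_succ_self]; ring

def qBinomCoeff (n i : ℕ) : S := (-1) ^ (n - i) * q ^ (n - i).choose 2 * gaussBinom q n i

lemma qBinomCoeff_eq_zero_of_lt {n i : ℕ} (h : n < i) : qBinomCoeff q n i = 0 := by
  rw [qBinomCoeff, gaussBinom_eq_zero_of_lt q h, mul_zero]

lemma qBinomCoeff_succ_zero (n : ℕ) : qBinomCoeff q (n + 1) 0 = -q ^ n * qBinomCoeff q n 0 := by
  simp only [qBinomCoeff, Nat.sub_zero, Nat.choose_succ_succ', Nat.choose_one_right,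
    gaussBinom_zero_right]
  ring

lemma qBinomCoeff_succ_succ (n i : ℕ) :
    qBinomCoeff q (n + 1) (i + 1) = qBinomCoeff q n i - q ^ n * qBinomCoeff q n (i + 1) := by
  rcases lt_or_ge n i with h | h
  · rw [qBinomCoeff_eq_zero_of_lt q h, qBinomCoeff_eq_zero_of_lt q (by omega),
      qBinomCoeff_eq_zero_of_lt q (by omega), mul_zero, sub_zero]
  obtain ⟨e, rfl⟩ := Nat.exists_eq_add_of_le h
  rcases e with _ | e
  · simp [qBinomCoeff, gaussBinom_eq_zero_of_lt q i.lt_succ_self]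
  · simp only [qBinomCoeff, gaussBinom_succ_succ,
      show i + (e + 1) + 1 - (i + 1) = e + 1 by omega, show i + (e + 1) - i = e + 1 by omega,
      show i + (e + 1) - (i + 1) = e by omega, Nat.choose_succ_succ', Nat.choose_one_right]
    ring

theorem prod_X_sub_C_pow_eq_sum_qBinomCoeff (n : ℕ) :
    ∏ k ∈ range n, (X - C (q ^ k)) = ∑ i ∈ range (n + 1), C (qBinomCoeff q n i) * X ^ i := by
  induction n with
  | zero => simp [qBinomCoeff]
  | succ n ih =>
    rw [prod_range_succ, ih, sum_range_succ' _ (n + 1), qBinomCoeff_succ_zero]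
    simp only [qBinomCoeff_succ_succ, C_sub, C_mul, sub_mul, sum_sub_distrib]
    rw [sum_range_succ (fun i => C (q ^ n) * C (qBinomCoeff q n (i + 1)) * X ^ (i + 1)),
      qBinomCoeff_eq_zero_of_lt q n.lt_succ_self, mul_sub, sum_mul, sum_mul,
      sum_range_succ' (fun i => C (qBinomCoeff q n i) * X ^ i * C (q ^ n))]
    simp only [C_0, C_neg, pow_succ, pow_zero, mul_zero, zero_mul, add_zero, mul_one]
    simp only [mul_assoc, mul_comm, mul_left_comm]
    ring

end GaussBinom

namespace IncidenceAlgebra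

lemma sum_apply {S ι α : Type*} [AddCommMonoid S] [LE α] (s : Finset ι)
    (f : ι → IncidenceAlgebra S α) (a b : α) :
    (∑ i ∈ s, f i : IncidenceAlgebra S α) a b = ∑ i ∈ s, f i a b :=
  map_sum ({ toFun := fun f => f a b, map_zero' := rfl, map_add' := fun _ _ => rfl } :
    IncidenceAlgebra S α →+ S) f s

variable {S : Type*} [Semiring S]

def IsBanded (f : IncidenceAlgebra S ℕ) (m : ℕ) : Prop :=
  ∀ ⦃s t : ℕ⦄, s + m < t → f s t = 0

lemma IsBanded.mul {f g : IncidenceAlgebra S ℕ} {m n : ℕ} (hf : f.IsBanded m)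
    (hg : g.IsBanded n) : (f * g).IsBanded (m + n) := by
  intro s t h
  rw [mul_apply]
  refine sum_eq_zero fun k _ => ?_
  rcases lt_or_ge (s + m) k with hk | hk
  · rw [hf hk, zero_mul]
  · rw [hg (by omega), mul_zero]

lemma IsBanded.pow {f : IncidenceAlgebra S ℕ} {m : ℕ} (hf : f.IsBanded m) (i : ℕ) :
    (f ^ i).IsBanded (m * i) := by
  induction i with
  | zero => intro s t h; simp only [pow_zero, one_apply]; exact if_neg (by omega)
  | succ i ih => rw [pow_succ, mul_add_one]; exact ih.mul hf

end IncidenceAlgebra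

open IncidenceAlgebra

section Rmat
variable {S : Type*} [Semiring S] (q : S)

def Rmat.toIncidence : IncidenceAlgebra S ℕ :=
  ⟨Rmat q, fun i j h => by simp only [Rmat]; rw [if_neg (by omega), if_neg (by omega)]⟩

lemma Rmat.toIncidence_apply (s t : ℕ) : Rmat.toIncidence q s t = Rmat q s t := rfl

lemma Rmat.isBanded_toIncidence : (Rmat.toIncidence q).IsBanded 1 := by
  intro s t h
  simp only [Rmat.toIncidence_apply, Rmat]; rw [if_neg (by omega), if_neg (by omega)]

lemma Rmat.toIncidence_mul_apply (f : IncidenceAlgebra S ℕ) (s t : ℕ) :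
    (Rmat.toIncidence q * f) s t = q ^ s * f s t + f (s + 1) t := by
  rcases lt_or_ge t s with hts | hst
  · rw [apply_eq_zero_of_not_le (by omega), apply_eq_zero_of_not_le (by omega) f,
      apply_eq_zero_of_not_le (by omega) f, mul_zero, add_zero]
  rw [mul_apply, sum_eq_add s (s + 1) (by omega)]
  · simp [Rmat.toIncidence_apply, Rmat]
  · intro k _ hk
    rw [Rmat.toIncidence_apply, Rmat, if_neg (Ne.symm hk.1), if_neg hk.2, zero_mul]
  · intro hs
    exact absurd (mem_Icc.2 ⟨le_rfl, hst⟩) hs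
  · intro hs
    rw [apply_eq_zero_of_not_le (by simp only [mem_Icc] at hs; omega) f, mul_zero]

end Rmat

section Xmat
variable {S : Type*} [CommRing S] (q : S)

lemma Rmat.toIncidence_pow_apply {i c : ℕ} (hc : c ≤ i) (s : ℕ) :
    (Rmat.toIncidence q ^ i) s (s + c) = q ^ (s * (i - c)) * gaussBinom q i (i - c) := by
  induction i generalizing s c with
  | zero =>
    obtain rfl : c = 0 := by omega
    simp
  | succ i ih =>
    rw [pow_succ', Rmat.toIncidence_mul_apply]
    rcases c with _ | c
    · rw [apply_eq_zero_of_not_le (show ¬s + 1 ≤ s + 0 by omega), add_zero, ih (Nat.zero_le i),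
        Nat.sub_zero, Nat.sub_zero, gaussBinom_self, gaussBinom_self]
      ring
    rw [show s + (c + 1) = s + 1 + c by omega, ih (by omega)]
    rcases Nat.lt_or_ge c i with hci | hci
    · obtain ⟨k, rfl⟩ := Nat.exists_eq_add_of_lt hci
      rw [show s + 1 + c = s + (c + 1) by omega, ih (by omega),
        show c + k + 1 + 1 - (c + 1) = k + 1 by omega, show c + k + 1 - (c + 1) = k by omega,
        show c + k + 1 - c = k + 1 by omega, gaussBinom_succ_succ q (c + k + 1) k]
      ring
    · obtain rfl : i = c := by omega
      rw [show s + 1 + i = s + i + 1 by omega, (Rmat.isBanded_toIncidence q).pow i (by omega)]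
      simp

lemma Xmat_eq_aeval (n : ℕ) :
    Xmat q n = ⇑(aeval (Rmat.toIncidence q) (∏ k ∈ range n, (X - C (q ^ k)))) := by
  induction n with
  | zero => ext i j; simp [Xmat]
  | succ n ih =>
    ext i j
    rw [Xmat, prod_range_succ, map_mul, mul_apply, ih, utMul]
    refine sum_congr rfl fun k _ => ?_
    rw [map_sub, aeval_X, aeval_C, IncidenceAlgebra.sub_apply, Algebra.algebraMap_eq_smul_one,
      constSMul_apply, one_apply, Rmat.toIncidence_apply, smul_eq_mul, mul_ite, mul_one, mul_zero]

lemma Xmat_apply_eq_sum (n s t : ℕ) :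
    Xmat q n s t = ∑ i ∈ range (n + 1), qBinomCoeff q n i * (Rmat.toIncidence q ^ i) s t := by
  rw [Xmat_eq_aeval, prod_X_sub_C_pow_eq_sum_qBinomCoeff, map_sum, IncidenceAlgebra.sum_apply]
  refine sum_congr rfl fun i _ => ?_
  rw [map_mul, aeval_C, aeval_X_pow, ← Algebra.smul_def, constSMul_apply, smul_eq_mul]

lemma Xmat_apply_add (n s c : ℕ) :
    Xmat q n s (s + c) = ∑ i ∈ Icc c n,
      (-1) ^ (n - i) * q ^ ((n - i).choose 2 + s * (i - c)) * gaussBinom q n i *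
        gaussBinom q i (i - c) := by
  have hsub : Icc c n ⊆ range (n + 1) := fun i hi =>
    mem_range.2 (Nat.lt_succ_of_le (mem_Icc.1 hi).2)
  rw [Xmat_apply_eq_sum, ← sum_subset hsub fun i hi hi' => ?_]
  · refine sum_congr rfl fun i hi => ?_
    rw [Rmat.toIncidence_pow_apply q (mem_Icc.1 hi).1, qBinomCoeff]
    ring
  · have hic : i < c := by simp only [mem_range, mem_Icc] at hi hi'; omega
    rw [(Rmat.isBanded_toIncidence q).pow i (by omega), mul_zero]

lemma Xmat_apply_eq_zero {n s t : ℕ} (h : t < s ∨ s + n < t) : Xmat q n s t = 0 := by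
  rcases h with h | h
  · rw [Xmat_eq_aeval]
    exact apply_eq_zero_of_not_le (by omega) _
  · rw [Xmat_apply_eq_sum]
    refine sum_eq_zero fun i hi => ?_
    rw [(Rmat.isBanded_toIncidence q).pow i (by rw [mem_range] at hi; omega), mul_zero]

end Xmat

theorem stmt10_general (p : ℕ) [Fact p.Prime] (q : ℤ) (n : ℕ) :
    (∀ s c : ℕ, c ≤ n →
      Xmat (((q : ℤ_[p])) ^ (p - 1)) n s (s + c) =
        ∑ i ∈ Finset.Icc c n,
          (-1 : ℤ_[p]) ^ (n - i) *
            (((q : ℤ_[p])) ^ (p - 1)) ^ (Nat.choose (n - i) 2 + s * (i - c)) *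
            gaussBinom (((q : ℤ_[p])) ^ (p - 1)) n i *
            gaussBinom (((q : ℤ_[p])) ^ (p - 1)) i (i - c)) ∧
    (∀ s t : ℕ, (t < s ∨ s + n < t) → Xmat (((q : ℤ_[p])) ^ (p - 1)) n s t = 0) :=
  ⟨fun s c _ => Xmat_apply_add _ n s c, fun _ _ => Xmat_apply_eq_zero _⟩

/-- for `n ≥ 1` and `0 ≤ c ≤ n`,
`(X_n)_{s,s+c} = ∑_{i=c}^n (−1)^(n−i) q̂^(C(n−i,2)+s(i−c)) [n choose i]_{q̂} [i choose i−c]_{q̂}`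
(rows/columns indexed from 0, so `s` corresponds to `s−1` of the 1-indexed statement),
and `(X_n)_{s,t} = 0` when `t < s` or `t > s + n`. -/
theorem stmt10 (p : ℕ) [Fact p.Prime] (hodd : Odd p) (q : ℤ)
    (hq : orderOf ((q : ZMod (p ^ 2))) = p * (p - 1)) (n : ℕ) (hn : 1 ≤ n) :
    (∀ s c : ℕ, c ≤ n →
      Xmat (((q : ℤ_[p])) ^ (p - 1)) n s (s + c) =
        ∑ i ∈ Finset.Icc c n,
          (-1 : ℤ_[p]) ^ (n - i) *
            (((q : ℤ_[p])) ^ (p - 1)) ^ (Nat.choose (n - i) 2 + s * (i - c)) *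
            gaussBinom (((q : ℤ_[p])) ^ (p - 1)) n i *
            gaussBinom (((q : ℤ_[p])) ^ (p - 1)) i (i - c)) ∧
    (∀ s t : ℕ, (t < s ∨ s + n < t) → Xmat (((q : ℤ_[p])) ^ (p - 1)) n s t = 0) :=
  stmt10_general p q n
end

section
/- Let C be an ℕ×ℕ upper triangular matrix over ℤ_p with C_{i,i} = q̂^i and C_{i,i+1} = 1 for all i ≥ 0 (other entries arbitrary elements c_{i,j} ∈ ℤ_p for j ≥ i+2). Define U recursively by U_{0,0} = 1, U_{0,j} = 0 for j > 0, and U_{i+1,j} = (∑_{s=i}^{j−2} U_{i,s} c_{s,j}) + U_{i,j−1} + (q̂^j − q̂^i) U_{i,j}. Then U is upper triangular with all diagonal entries in ℤ_p^×, hence invertible, and UC = RU where R is the matrix with R_{i,i} = q̂^i, R_{i,i+1} = 1 and all other entries zero. Consequently UCU^{-1} = R. -/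
/-- The identity ℕ×ℕ matrix. -/
def idMat {R : Type*} [Semiring R] : ℕ → ℕ → R :=
  fun i j => if i = j then 1 else 0

/-!
The recursion for `U` is the entrywise form of `UC = RU`: comparing the `(i, j)` entries,
`(RU)_{i,j} = q̂^i U_{i,j} + U_{i+1,j}` while `(UC)_{i,j}` is the sum in the recursion plus
`U_{i,j-1} + q̂^j U_{i,j}`. The same recursion shows that `U` is upper triangular and that
`U_{i+1,i+1} = U_{i,i} + q̂^i (q̂ - 1) U_{i,i+1}`; since `q̂ - 1` lies in the maximal ideal
`pℤ_p`, all diagonal entries are units. An upper triangular matrix with unit diagonal has an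
upper triangular right inverse `V`, computed by back substitution; `V` again has a unit diagonal,
so it has a right inverse of its own, which by associativity is `U`, and `V` is a two-sided inverse.
-/

open Finset IsLocalRing

def IsUpperTriangular {R : Type*} [Zero R] (A : ℕ → ℕ → R) : Prop :=
  ∀ i j, j < i → A i j = 0

section Multiplication

variable {R : Type*} [Semiring R]

theorem utMul_assoc (A B C : ℕ → ℕ → R) :
    utMul (utMul A B) C = utMul A (utMul B C) := by
  funext i j
  simp only [utMul, sum_mul, mul_sum, mul_assoc]
  rw [sum_sigma', sum_sigma']
  apply sum_nbij' (fun x => ⟨x.2, x.1⟩) (fun x => ⟨x.2, x.1⟩) <;>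
    first
    | rintro ⟨k, l⟩ h; simp only [mem_sigma, mem_Icc] at *; omega
    | intros; rfl

theorem utMul_idMat {A : ℕ → ℕ → R} (hA : IsUpperTriangular A) : utMul A idMat = A := by
  funext i j
  simp only [utMul, idMat, mul_ite, mul_one, mul_zero, sum_ite_eq', mem_Icc, le_refl, and_true]
  split_ifs with hij
  · rfl
  · exact (hA i j (not_le.1 hij)).symm

theorem idMat_utMul {A : ℕ → ℕ → R} (hA : IsUpperTriangular A) : utMul idMat A = A := by
  funext i j
  simp only [utMul, idMat, ite_mul, one_mul, zero_mul, sum_ite_eq, mem_Icc, le_refl, true_and]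
  split_ifs with hij
  · rfl
  · exact (hA i j (not_le.1 hij)).symm

end Multiplication

section Inverse

variable {R : Type*} [Ring R] (U : ℕ → ℕ → R)

/-- Back substitution for `U V = 1`, one column at a time, from the diagonal upwards. -/
noncomputable def utRightInv (i j : ℕ) : R :=
  if i = j then Ring.inverse (U i i)
  else -Ring.inverse (U i i) * ∑ k ∈ (Ioc i j).attach, U i k * utRightInv k j
termination_by j - i
decreasing_by have := mem_Ioc.1 k.2; omega

theorem utRightInv_eq (i j : ℕ) :
    utRightInv U i j = if i = j then Ring.inverse (U i i)
      else -Ring.inverse (U i i) * ∑ k ∈ Ioc i j, U i k * utRightInv U k j := by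
  rw [utRightInv, sum_attach (Ioc i j) fun k => U i k * utRightInv U k j]

theorem utRightInv_diag (i : ℕ) : utRightInv U i i = Ring.inverse (U i i) := by
  rw [utRightInv_eq, if_pos rfl]

theorem isUpperTriangular_utRightInv : IsUpperTriangular (utRightInv U) := fun i j hji => by
  rw [utRightInv_eq, if_neg hji.ne', Ioc_eq_empty hji.not_gt, sum_empty, mul_zero]

variable {U}

theorem utMul_utRightInv (hU : ∀ i, IsUnit (U i i)) : utMul U (utRightInv U) = idMat := by
  funext i j
  simp only [utMul, idMat]
  rcases lt_trichotomy i j with hij | rfl | hji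
  · rw [← Ioc_insert_left hij.le, sum_insert left_notMem_Ioc, utRightInv_eq,
      if_neg hij.ne, if_neg hij.ne, ← mul_assoc, mul_neg, Ring.mul_inverse_cancel _ (hU i),
      neg_one_mul, neg_add_cancel]
  · rw [Icc_self, sum_singleton, utRightInv_diag, Ring.mul_inverse_cancel _ (hU i), if_pos rfl]
  · rw [Icc_eq_empty hji.not_ge, sum_empty, if_neg hji.ne']

theorem utRightInv_utMul (hUt : IsUpperTriangular U) (hU : ∀ i, IsUnit (U i i)) :
    utMul (utRightInv U) U = idMat := by
  have hV : ∀ i, IsUnit (utRightInv U i i) := fun i => by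
    rw [utRightInv_diag]; exact (hU i).ringInverse
  have hVV := utMul_utRightInv hV
  have hU_eq : U = utRightInv (utRightInv U) := calc
    U = utMul U (utMul (utRightInv U) (utRightInv (utRightInv U))) := by
      rw [hVV, utMul_idMat hUt]
    _ = utRightInv (utRightInv U) := by
      rw [← utMul_assoc, utMul_utRightInv hU, idMat_utMul (isUpperTriangular_utRightInv _)]
  rwa [← hU_eq] at hVV

end Inverse

section Recursion

variable {R : Type*} [CommRing R] {qh : R} {C U : ℕ → ℕ → R}

theorem isUpperTriangular_Rmat (qh : R) : IsUpperTriangular (Rmat qh) := fun i j hji => by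
  simp only [Rmat, if_neg hji.ne', if_neg (by omega : j ≠ i + 1)]

theorem isUpperTriangular_of_rec
    (hUrec : ∀ i j, 1 ≤ j → U (i + 1) j =
      (∑ s ∈ Ico i (j - 1), U i s * C s j) + U i (j - 1) + (qh ^ j - qh ^ i) * U i j)
    (hUrec0 : ∀ i, U (i + 1) 0 = (1 - qh ^ i) * U i 0) :
    IsUpperTriangular U := by
  intro i
  induction i with
  | zero => intro j h; omega
  | succ i ih =>
    intro j hj
    rcases Nat.eq_zero_or_pos j with rfl | hj0
    · rcases Nat.eq_zero_or_pos i with rfl | hi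
      · simp [hUrec0]
      · rw [hUrec0, ih 0 hi, mul_zero]
    · rw [hUrec i j hj0, Ico_eq_empty (by omega), sum_empty, ih (j - 1) (by omega)]
      rcases Nat.lt_or_ge j i with hji | hij
      · rw [ih j hji]; ring
      · obtain rfl : j = i := by omega
        ring

theorem isUnit_diag_of_rec [IsLocalRing R] (hq : qh - 1 ∈ maximalIdeal R)
    (hU00 : U 0 0 = 1)
    (hUrec : ∀ i j, 1 ≤ j → U (i + 1) j =
      (∑ s ∈ Ico i (j - 1), U i s * C s j) + U i (j - 1) + (qh ^ j - qh ^ i) * U i j)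
    (i : ℕ) : IsUnit (U i i) := by
  induction i with
  | zero => rw [hU00]; exact isUnit_one
  | succ i ih =>
    have hdiag : U (i + 1) (i + 1) = U i i + qh ^ i * (qh - 1) * U i (i + 1) := by
      rw [hUrec i (i + 1) le_add_self, Nat.add_sub_cancel, Ico_self, sum_empty]; ring
    have hmem : qh ^ i * (qh - 1) * U i (i + 1) ∈ maximalIdeal R :=
      Ideal.mul_mem_right _ _ (Ideal.mul_mem_left _ _ hq)
    rw [← notMem_maximalIdeal] at ih ⊢
    rwa [hdiag, Ideal.add_mem_iff_left _ hmem]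

theorem utMul_eq_Rmat_utMul (hCd : ∀ i, C i i = qh ^ i) (hCs : ∀ i, C i (i + 1) = 1)
    (hUrec : ∀ i j, 1 ≤ j → U (i + 1) j =
      (∑ s ∈ Ico i (j - 1), U i s * C s j) + U i (j - 1) + (qh ^ j - qh ^ i) * U i j) :
    utMul U C = utMul (Rmat qh) U := by
  funext i j
  simp only [utMul]
  rcases lt_trichotomy i j with hij | rfl | hji
  · obtain ⟨m, rfl⟩ : ∃ m, j = m + 1 := ⟨j - 1, by omega⟩
    have hRU : ∑ k ∈ Icc i (m + 1), Rmat qh i k * U k (m + 1)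
        = qh ^ i * U i (m + 1) + U (i + 1) (m + 1) := by
      rw [sum_eq_add_of_mem i (i + 1) (by simp only [mem_Icc]; omega)
        (by simp only [mem_Icc]; omega) (by omega)
        (fun k _ hk => by simp only [Rmat, if_neg hk.1.symm, if_neg hk.2, zero_mul])]
      simp [Rmat]
    have hUC : ∑ k ∈ Icc i (m + 1), U i k * C k (m + 1)
        = (∑ s ∈ Ico i m, U i s * C s (m + 1)) + U i m + qh ^ (m + 1) * U i (m + 1) := by
      rw [sum_Icc_succ_top (by omega), ← Ico_add_one_right_eq_Icc,
        sum_Ico_succ_top (by omega), hCs, hCd, mul_one, mul_comm (U i (m + 1))]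
    rw [hUC, hRU, hUrec i (m + 1) le_add_self, Nat.add_sub_cancel]
    ring
  · rw [Icc_self, sum_singleton, sum_singleton, hCd, Rmat, if_pos rfl, mul_comm]
  · rw [Icc_eq_empty hji.not_ge, sum_empty, sum_empty]

end Recursion

theorem stmt13_general (p : ℕ) [Fact p.Prime] (qh : ℤ_[p])
    (hqh : ∃ y : ℤ_[p], qh = 1 + p * y)
    (Cm : ℕ → ℕ → ℤ_[p])
    (hCd : ∀ i, Cm i i = qh ^ i) (hCs : ∀ i, Cm i (i + 1) = 1)
    (U : ℕ → ℕ → ℤ_[p]) (hU00 : U 0 0 = 1)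
    (hUrec : ∀ i j, 1 ≤ j → U (i + 1) j =
      (∑ s ∈ Finset.Ico i (j - 1), U i s * Cm s j) + U i (j - 1) +
        (qh ^ j - qh ^ i) * U i j)
    (hUrec0 : ∀ i, U (i + 1) 0 = (1 - qh ^ i) * U i 0) :
    (∀ i j, j < i → U i j = 0) ∧
    (∀ i, IsUnit (U i i)) ∧
    utMul U Cm = utMul (Rmat qh) U ∧
    ∃ V : ℕ → ℕ → ℤ_[p],
      utMul U V = idMat ∧ utMul V U = idMat ∧ utMul (utMul U Cm) V = Rmat qh := by
  obtain ⟨y, rfl⟩ := hqh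
  have hq : (1 + p * y) - 1 ∈ maximalIdeal ℤ_[p] := by
    rw [add_sub_cancel_left, mem_maximalIdeal]
    exact mul_mem_nonunits_left PadicInt.p_nonunit
  have hUt := isUpperTriangular_of_rec hUrec hUrec0
  have hU := isUnit_diag_of_rec hq hU00 hUrec
  have hUC := utMul_eq_Rmat_utMul hCd hCs hUrec
  refine ⟨hUt, hU, hUC, utRightInv U, utMul_utRightInv hU, utRightInv_utMul hUt hU, ?_⟩
  rw [hUC, utMul_assoc, utMul_utRightInv hU, utMul_idMat (isUpperTriangular_Rmat _)]

/-- for `C` upper triangular with `C_{i,i} = q̂^i`, `C_{i,i+1} = 1`, the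
recursively defined matrix `U` (first row `(1,0,0,…)`, and
`U_{i+1,j} = (∑_{s=i}^{j−2} U_{i,s} c_{s,j}) + U_{i,j−1} + (q̂^j − q̂^i) U_{i,j}`)
is upper triangular with unit diagonal entries, hence invertible, and `UC = RU`,
so `UCU⁻¹ = R`. -/
theorem stmt13 (p : ℕ) [Fact p.Prime] (hodd : Odd p) (qh : ℤ_[p])
    (hqh : ∃ y : ℤ_[p], qh = 1 + p * y)
    (Cm : ℕ → ℕ → ℤ_[p]) (hCtri : ∀ i j, j < i → Cm i j = 0)
    (hCd : ∀ i, Cm i i = qh ^ i) (hCs : ∀ i, Cm i (i + 1) = 1)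
    (U : ℕ → ℕ → ℤ_[p]) (hU00 : U 0 0 = 1) (hU0 : ∀ j, 0 < j → U 0 j = 0)
    (hUrec : ∀ i j, 1 ≤ j → U (i + 1) j =
      (∑ s ∈ Finset.Ico i (j - 1), U i s * Cm s j) + U i (j - 1) +
        (qh ^ j - qh ^ i) * U i j)
    (hUrec0 : ∀ i, U (i + 1) 0 = (1 - qh ^ i) * U i 0) :
    (∀ i j, j < i → U i j = 0) ∧
    (∀ i, IsUnit (U i i)) ∧
    utMul U Cm = utMul (Rmat qh) U ∧
    ∃ V : ℕ → ℕ → ℤ_[p],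
      utMul U V = idMat ∧ utMul V U = idMat ∧ utMul (utMul U Cm) V = Rmat qh :=
  stmt13_general p qh hqh Cm hCd hCs U hU00 hUrec hUrec0
end

section
/- Define g_{m,l} = u^i (u/p)^j f_l ∈ ℚ_p[u,v] for m ≥ l, where (i,j) = (0, m−l) if m ≤ ν_p(l!) + l and (i,j) = (m−l−ν_p(l!), ν_p(l!)) if m > ν_p(l!) + l. Then for n ≤ m: u^(m−n) g_{n,i} = p^(m−n) g_{m,i} if n ≤ m ≤ ν_p(i!)+i; u^(m−n) g_{n,i} = p^(ν_p(i!)−n+i) g_{m,i} if n ≤ ν_p(i!)+i < m; and u^(m−n) g_{n,i} = g_{m,i} if ν_p(i!)+i < n ≤ m. -/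
open MvPolynomial

/-- `g_{m,l} = (u/p)^(m−l) f_l` if `m ≤ ν_p(l!)+l` and
`g_{m,l} = u^(m−l−ν_p(l!)) (u/p)^(ν_p(l!)) f_l` otherwise. -/
noncomputable def gpoly (p : ℕ) [Fact p.Prime] (q : ℤ) (m l : ℕ) :
    MvPolynomial (Fin 2) ℚ_[p] :=
  if m ≤ padicValNat p (Nat.factorial l) + l then
    (C ((p : ℚ_[p])⁻¹) * X 0) ^ (m - l) * fpoly p q l
  else
    (X 0) ^ (m - l - padicValNat p (Nat.factorial l)) *
      (C ((p : ℚ_[p])⁻¹) * X 0) ^ (padicValNat p (Nat.factorial l)) * fpoly p q l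

/-! Writing `u = p · (u/p)`, each identity is a regrouping of powers of `u` and `u/p`
in front of `f_i`: a factor `u` turns into `p · (u/p)` exactly while the exponent of
`u/p` has not yet reached its cap `ν_p(i!)`. -/

theorem MvPolynomial.X_pow_eq_C_pow_mul_C_inv_mul_X_pow {σ K : Type*} [Field K] {a : K}
    (ha : a ≠ 0) (j : σ) (k : ℕ) :
    (X j : MvPolynomial σ K) ^ k = C (a ^ k) * (C a⁻¹ * X j) ^ k := by
  rw [map_pow, ← mul_pow, ← mul_assoc, ← map_mul, mul_inv_cancel₀ ha, map_one, one_mul]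

section gpoly

variable {p : ℕ} [Fact p.Prime] {q : ℤ} {i n m : ℕ}

theorem X_zero_pow_eq_C_pow_mul (k : ℕ) :
    (X 0 : MvPolynomial (Fin 2) ℚ_[p]) ^ k = C ((p : ℚ_[p]) ^ k) * (C (p : ℚ_[p])⁻¹ * X 0) ^ k :=
  X_pow_eq_C_pow_mul_C_inv_mul_X_pow (Nat.cast_ne_zero.mpr (Fact.out : p.Prime).ne_zero) 0 k

theorem gpoly_of_le (h : m ≤ padicValNat p i.factorial + i) :
    gpoly p q m i = (C (p : ℚ_[p])⁻¹ * X 0) ^ (m - i) * fpoly p q i :=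
  if_pos h

theorem gpoly_of_lt (h : padicValNat p i.factorial + i < m) :
    gpoly p q m i = X 0 ^ (m - i - padicValNat p i.factorial) *
      (C (p : ℚ_[p])⁻¹ * X 0) ^ padicValNat p i.factorial * fpoly p q i :=
  if_neg h.not_ge

theorem X_zero_pow_mul_gpoly_of_le (hin : i ≤ n) (hnm : n ≤ m)
    (hm : m ≤ padicValNat p i.factorial + i) :
    X 0 ^ (m - n) * gpoly p q n i = C ((p : ℚ_[p]) ^ (m - n)) * gpoly p q m i := by
  rw [gpoly_of_le (hnm.trans hm), gpoly_of_le hm, X_zero_pow_eq_C_pow_mul,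
    show m - i = (m - n) + (n - i) by omega, pow_add]
  ring

theorem X_zero_pow_mul_gpoly_of_le_of_lt (hin : i ≤ n)
    (hn : n ≤ padicValNat p i.factorial + i) (hm : padicValNat p i.factorial + i < m) :
    X 0 ^ (m - n) * gpoly p q n i =
      C ((p : ℚ_[p]) ^ (padicValNat p i.factorial + i - n)) * gpoly p q m i := by
  set V := padicValNat p i.factorial
  have hV : (C (p : ℚ_[p])⁻¹ * X 0 : MvPolynomial (Fin 2) ℚ_[p]) ^ V =
      (C (p : ℚ_[p])⁻¹ * X 0) ^ (V + i - n) * (C (p : ℚ_[p])⁻¹ * X 0) ^ (n - i) := by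
    rw [← pow_add]; congr 1; omega
  rw [gpoly_of_le hn, gpoly_of_lt hm, hV, show m - n = (m - i - V) + (V + i - n) by omega,
    pow_add, X_zero_pow_eq_C_pow_mul (V + i - n)]
  ring

theorem X_zero_pow_mul_gpoly_of_lt (hnm : n ≤ m) (hn : padicValNat p i.factorial + i < n) :
    X 0 ^ (m - n) * gpoly p q n i = gpoly p q m i := by
  rw [gpoly_of_lt hn, gpoly_of_lt (hn.trans_le hnm),
    show m - i - padicValNat p i.factorial = (m - n) + (n - i - padicValNat p i.factorial) by
      omega, pow_add]
  ring

end gpoly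

theorem stmt16_general (p : ℕ) [Fact p.Prime] (q : ℤ)
    (i n m : ℕ) (hin : i ≤ n) (hnm : n ≤ m) :
    (m ≤ padicValNat p (Nat.factorial i) + i →
      (X 0) ^ (m - n) * gpoly p q n i =
        C ((p : ℚ_[p]) ^ (m - n)) * gpoly p q m i) ∧
    (n ≤ padicValNat p (Nat.factorial i) + i →
      padicValNat p (Nat.factorial i) + i < m →
      (X 0) ^ (m - n) * gpoly p q n i =
        C ((p : ℚ_[p]) ^ (padicValNat p (Nat.factorial i) + i - n)) * gpoly p q m i) ∧
    (padicValNat p (Nat.factorial i) + i < n →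
      (X 0) ^ (m - n) * gpoly p q n i = gpoly p q m i) :=
  ⟨X_zero_pow_mul_gpoly_of_le hin hnm, X_zero_pow_mul_gpoly_of_le_of_lt hin,
    X_zero_pow_mul_gpoly_of_lt hnm⟩

/-- for `i ≤ n ≤ m`,
`u^(m−n) g_{n,i} = p^(m−n) g_{m,i}` if `n ≤ m ≤ ν_p(i!)+i`;
`u^(m−n) g_{n,i} = p^(ν_p(i!)−n+i) g_{m,i}` if `n ≤ ν_p(i!)+i < m`; and
`u^(m−n) g_{n,i} = g_{m,i}` if `ν_p(i!)+i < n ≤ m`. -/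
theorem stmt16 (p : ℕ) [Fact p.Prime] (hodd : Odd p) (q : ℤ)
    (hq : orderOf ((q : ZMod (p ^ 2))) = p * (p - 1))
    (i n m : ℕ) (hin : i ≤ n) (hnm : n ≤ m) :
    (m ≤ padicValNat p (Nat.factorial i) + i →
      (X 0) ^ (m - n) * gpoly p q n i =
        C ((p : ℚ_[p]) ^ (m - n)) * gpoly p q m i) ∧
    (n ≤ padicValNat p (Nat.factorial i) + i →
      padicValNat p (Nat.factorial i) + i < m →
      (X 0) ^ (m - n) * gpoly p q n i =
        C ((p : ℚ_[p]) ^ (padicValNat p (Nat.factorial i) + i - n)) * gpoly p q m i) ∧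
    (padicValNat p (Nat.factorial i) + i < n →
      (X 0) ^ (m - n) * gpoly p q n i = gpoly p q m i) :=
  stmt16_general p q i n m hin hnm
end

section
/- Let the map Ψ on ℚ_p[u,v] fix u and send v to q̂v, and define g_{m,n} as above. Then for m > n ≥ 1: Ψ(g_{m,n}) = q̂^n g_{m,n} + g_{m,n−1} if m > ν_p(n!) + n; Ψ(g_{m,n}) = q̂^n g_{m,n} + p^(ν_p(n!)+n−m) g_{m,n−1} if ν_p((n−1)!) + n − 1 < m ≤ ν_p(n!) + n; and Ψ(g_{m,n}) = q̂^n g_{m,n} + p^(ν_p(n)+1) g_{m,n−1} if m ≤ ν_p((n−1)!) + n − 1. -/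
open MvPolynomial

/-!
`Ψ` rescales `v` by `q̂`, so it sends the factor `v − q̂^(i+1) u` of
`∏_{i ≤ k} (v − q̂^i u)` to `q̂ (v − q̂^i u)`; peeling off the `i = 0` factor and comparing with
`q̂^(k+1)` times the product gives `Ψ(c_{k+1}) = q̂^(k+1) c_{k+1} + u c_k`, provided
`q̂ ≠ 0` and `q̂^(k+1) ≠ 1`. Both hold because `q` has order `p(p−1) > 2` modulo `p²`, hence
`|q| ≥ 2`. Scaling by `p^ν_p((k+1)!)` yields `Ψ(f_{k+1}) = q̂^(k+1) f_{k+1} + p^ν_p(k+1) u f_k`.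
Finally `g_{m,l} = p^(−min(m−l, ν_p(l!))) u^(m−l) f_l`, and the three cases of the theorem are
the three values of `ν_p(n) + min(m−n+1, ν_p((n−1)!)) − min(m−n, ν_p(n!))`.
-/

section Dilation

variable {R : Type*} [CommRing R] (t : R)

noncomputable def scaleX1 : MvPolynomial (Fin 2) R →ₐ[R] MvPolynomial (Fin 2) R :=
  aeval fun i : Fin 2 => if i = 0 then X 0 else C t * X 1

@[simp] lemma scaleX1_X0 : scaleX1 t (X 0) = X 0 := by simp [scaleX1]

@[simp] lemma scaleX1_X1 : scaleX1 t (X 1) = C t * X 1 := by simp [scaleX1]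

@[simp] lemma scaleX1_C (a : R) : scaleX1 t (C a) = C a := algHom_C _ a

noncomputable def qPochhammerPoly (k : ℕ) : MvPolynomial (Fin 2) R :=
  ∏ i ∈ Finset.range k, (X 1 - C (t ^ i) * X 0)

lemma scaleX1_qPochhammerPoly_succ (k : ℕ) :
    scaleX1 t (qPochhammerPoly t (k + 1)) =
      C (t ^ (k + 1)) * qPochhammerPoly t (k + 1) +
        C (t ^ k * (t ^ (k + 1) - 1)) * X 0 * qPochhammerPoly t k := by
  have shift : ∀ i : ℕ,
      scaleX1 t (X 1 - C (t ^ (i + 1)) * X 0) = C t * (X 1 - C (t ^ i) * X 0) := by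
    intro i
    simp only [map_sub, map_mul, scaleX1_X0, scaleX1_X1, scaleX1_C, pow_succ']
    ring
  have image : scaleX1 t (qPochhammerPoly t (k + 1)) =
      C (t ^ k) * (C t * X 1 - X 0) * qPochhammerPoly t k := by
    rw [qPochhammerPoly, map_prod, Finset.prod_range_succ']
    simp only [shift, Finset.prod_mul_distrib, Finset.prod_const, Finset.card_range, pow_zero,
      map_one, one_mul, map_sub, scaleX1_X0, scaleX1_X1, ← C_pow, qPochhammerPoly]
    ring
  have split : qPochhammerPoly t (k + 1) = qPochhammerPoly t k * (X 1 - C (t ^ k) * X 0) :=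
    Finset.prod_range_succ _ _
  rw [image, split]
  simp only [map_mul, map_sub, map_pow, map_one]
  ring

def qBinomialDenom (k : ℕ) : R := ∏ i ∈ Finset.range k, (t ^ k - t ^ i)

lemma qBinomialDenom_succ (k : ℕ) :
    qBinomialDenom t (k + 1) = (t ^ (k + 1) - 1) * t ^ k * qBinomialDenom t k := by
  have shift : ∀ i : ℕ, t ^ (k + 1) - t ^ (i + 1) = t * (t ^ k - t ^ i) := fun i => by ring
  rw [qBinomialDenom, Finset.prod_range_succ', qBinomialDenom]
  simp only [shift, Finset.prod_mul_distrib, Finset.prod_const, Finset.card_range]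
  ring

end Dilation

section QBinomial

variable {K : Type*} [Field K] (t : K)

noncomputable def qBinomialPoly (k : ℕ) : MvPolynomial (Fin 2) K :=
  ∏ i ∈ Finset.range k, (C ((t ^ k - t ^ i)⁻¹) * (X 1 - C (t ^ i) * X 0))

lemma qBinomialPoly_eq (k : ℕ) :
    qBinomialPoly t k = C (qBinomialDenom t k)⁻¹ * qPochhammerPoly t k := by
  rw [qBinomialPoly, Finset.prod_mul_distrib, ← map_prod, Finset.prod_inv_distrib,
    qBinomialDenom, qPochhammerPoly]

lemma scaleX1_qBinomialPoly_succ {t : K} (ht : t ≠ 0) {k : ℕ} (htk : t ^ (k + 1) ≠ 1) :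
    scaleX1 t (qBinomialPoly t (k + 1)) =
      C (t ^ (k + 1)) * qBinomialPoly t (k + 1) + X 0 * qBinomialPoly t k := by
  have denom :
      (qBinomialDenom t (k + 1))⁻¹ * (t ^ k * (t ^ (k + 1) - 1)) = (qBinomialDenom t k)⁻¹ := by
    rw [qBinomialDenom_succ]
    field_simp [sub_ne_zero.mpr htk, pow_ne_zero k ht]
  simp only [qBinomialPoly_eq, map_mul, scaleX1_C, scaleX1_qPochhammerPoly_succ, ← denom]
  ring

end QBinomial

lemma two_le_natAbs_of_two_lt_orderOf {R : Type*} [Ring R] {q : ℤ} (hq : 2 < orderOf (q : R)) :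
    2 ≤ q.natAbs := by
  by_contra! h
  obtain rfl | rfl | rfl : q = 0 ∨ q = 1 ∨ q = -1 := by omega
  all_goals simp only [Int.cast_zero, Int.cast_one, Int.cast_neg] at hq
  · have : (0 : R) = 1 := isUnit_zero_iff.mp (orderOf_pos_iff.mp (by omega)).isUnit
    simp [this] at hq
  · simp at hq
  · have : orderOf (-1 : R) ≤ 2 := orderOf_le_of_pow_eq_one two_pos (by simp)
    omega

lemma intCast_pow_ne_one {S : Type*} [Ring S] [CharZero S] {q : ℤ} (hq : 2 ≤ q.natAbs) {N : ℕ}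
    (hN : N ≠ 0) : (q : S) ^ N ≠ 1 := by
  rw [← Int.cast_pow, Ne, Int.cast_eq_one]
  intro h
  have := congrArg Int.natAbs h
  rw [Int.natAbs_pow] at this
  exact (Nat.one_lt_pow hN (by omega)).ne' this

lemma padicValNat_factorial_succ (p : ℕ) [Fact p.Prime] (k : ℕ) :
    padicValNat p (k + 1).factorial = padicValNat p (k + 1) + padicValNat p k.factorial := by
  rw [Nat.factorial_succ, padicValNat.mul k.succ_ne_zero (Nat.factorial_ne_zero k)]

section PsiMap

variable {p : ℕ} [Fact p.Prime] {q : ℤ}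

lemma PsiMap_eq_scaleX1 : PsiMap p q = scaleX1 ((q : ℚ_[p]) ^ (p - 1)) := rfl

lemma cpoly_eq_qBinomialPoly (k : ℕ) :
    cpoly p q k = qBinomialPoly ((q : ℚ_[p]) ^ (p - 1)) k := rfl

lemma PsiMap_fpoly_succ (hq : 2 ≤ q.natAbs) (k : ℕ) :
    PsiMap p q (fpoly p q (k + 1)) =
      C (((q : ℚ_[p]) ^ (p - 1)) ^ (k + 1)) * fpoly p q (k + 1) +
        C ((p : ℚ_[p]) ^ padicValNat p (k + 1)) * X 0 * fpoly p q k := by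
  have hp := (Fact.out : p.Prime).two_le
  have hq0 : (q : ℚ_[p]) ^ (p - 1) ≠ 0 := pow_ne_zero _ (Int.cast_ne_zero.mpr (by omega))
  have hq1 : ((q : ℚ_[p]) ^ (p - 1)) ^ (k + 1) ≠ 1 := by
    rw [← pow_mul]
    exact intCast_pow_ne_one hq (Nat.mul_ne_zero (by omega) k.succ_ne_zero)
  simp only [fpoly, cpoly_eq_qBinomialPoly, PsiMap_eq_scaleX1, map_mul, scaleX1_C,
    scaleX1_qBinomialPoly_succ hq0 hq1, padicValNat_factorial_succ, pow_add]
  ring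

lemma gpoly_eq_C_mul_X_pow_mul_fpoly (m l : ℕ) :
    gpoly p q m l =
      C ((p : ℚ_[p])⁻¹ ^ min (m - l) (padicValNat p l.factorial)) * X 0 ^ (m - l) *
        fpoly p q l := by
  rw [gpoly]
  split_ifs with h
  · rw [min_eq_left (by omega), mul_pow, C_pow]
  · obtain ⟨e, he⟩ : ∃ e, m - l = e + padicValNat p l.factorial :=
      ⟨_, (Nat.sub_add_cancel (by omega)).symm⟩
    rw [min_eq_right (by omega), he, Nat.add_sub_cancel, mul_pow, C_pow, pow_add]
    ring

lemma PsiMap_gpoly_succ (hq : 2 ≤ q.natAbs) {m k : ℕ} (hkm : k < m) (c : ℕ)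
    (hc : c + min (m - (k + 1)) (padicValNat p (k + 1).factorial) =
      padicValNat p (k + 1) + min (m - k) (padicValNat p k.factorial)) :
    PsiMap p q (gpoly p q m (k + 1)) =
      C (((q : ℚ_[p]) ^ (p - 1)) ^ (k + 1)) * gpoly p q m (k + 1) +
        C ((p : ℚ_[p]) ^ c) * gpoly p q m k := by
  have hp : (p : ℚ_[p]) ≠ 0 := Nat.cast_ne_zero.mpr (Fact.out : p.Prime).ne_zero
  have scalar : (p : ℚ_[p])⁻¹ ^ min (m - (k + 1)) (padicValNat p (k + 1).factorial) *
      (p : ℚ_[p]) ^ padicValNat p (k + 1) =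
        (p : ℚ_[p]) ^ c * (p : ℚ_[p])⁻¹ ^ min (m - k) (padicValNat p k.factorial) := by
    rw [inv_pow, inv_pow, inv_mul_eq_iff_eq_mul₀ (pow_ne_zero _ hp), ← mul_assoc,
      eq_mul_inv_iff_mul_eq₀ (pow_ne_zero _ hp), ← pow_add, ← pow_add]
    congr 1
    omega
  have hX : (X 0 : MvPolynomial (Fin 2) ℚ_[p]) ^ (m - k) = X 0 ^ (m - (k + 1)) * X 0 := by
    rw [← pow_succ]
    congr 1
    omega
  have scalarC := congrArg (C (σ := Fin 2)) scalar
  rw [map_mul, map_mul] at scalarC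
  simp only [gpoly_eq_C_mul_X_pow_mul_fpoly, map_mul, map_pow (PsiMap p q), PsiMap_fpoly_succ hq]
  simp only [PsiMap_eq_scaleX1, scaleX1_C, scaleX1_X0, hX]
  linear_combination (X 0 ^ (m - (k + 1)) * X 0 * fpoly p q k) * scalarC

end PsiMap

/-- for `m > n ≥ 1`:
`Ψ(g_{m,n}) = q̂^n g_{m,n} + g_{m,n−1}` if `m > ν_p(n!)+n`;
`Ψ(g_{m,n}) = q̂^n g_{m,n} + p^(ν_p(n!)+n−m) g_{m,n−1}` if `ν_p((n−1)!)+n−1 < m ≤ ν_p(n!)+n`;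
`Ψ(g_{m,n}) = q̂^n g_{m,n} + p^(ν_p(n)+1) g_{m,n−1}` if `m ≤ ν_p((n−1)!)+n−1`. -/
theorem stmt18 (p : ℕ) [Fact p.Prime] (hodd : Odd p) (q : ℤ)
    (hq : orderOf ((q : ZMod (p ^ 2))) = p * (p - 1))
    (m n : ℕ) (hn : 1 ≤ n) (hmn : n < m) :
    (padicValNat p (Nat.factorial n) + n < m →
      PsiMap p q (gpoly p q m n) =
        C (((q : ℚ_[p]) ^ (p - 1)) ^ n) * gpoly p q m n + gpoly p q m (n - 1)) ∧
    (padicValNat p (Nat.factorial (n - 1)) + (n - 1) < m →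
      m ≤ padicValNat p (Nat.factorial n) + n →
      PsiMap p q (gpoly p q m n) =
        C (((q : ℚ_[p]) ^ (p - 1)) ^ n) * gpoly p q m n +
          C ((p : ℚ_[p]) ^ (padicValNat p (Nat.factorial n) + n - m)) *
            gpoly p q m (n - 1)) ∧
    (m ≤ padicValNat p (Nat.factorial (n - 1)) + (n - 1) →
      PsiMap p q (gpoly p q m n) =
        C (((q : ℚ_[p]) ^ (p - 1)) ^ n) * gpoly p q m n +
          C ((p : ℚ_[p]) ^ (padicValNat p n + 1)) * gpoly p q m (n - 1)) := by
  obtain ⟨k, rfl⟩ : ∃ k, n = k + 1 := ⟨n - 1, by omega⟩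
  have hp3 : 3 ≤ p := by
    have := (Fact.out : p.Prime).two_le
    have := Nat.odd_iff.mp hodd
    omega
  have hq' : 2 ≤ q.natAbs :=
    two_le_natAbs_of_two_lt_orderOf (R := ZMod (p ^ 2))
      (by rw [hq]; have := Nat.mul_le_mul hp3 (by omega : 2 ≤ p - 1); omega)
  have hν := padicValNat_factorial_succ p k
  simp only [Nat.add_sub_cancel]
  refine ⟨fun h => ?_, fun _ h => ?_, fun h => ?_⟩
  · simpa only [pow_zero, map_one, one_mul] using PsiMap_gpoly_succ hq' hmn.le 0 (by omega)
  · exact PsiMap_gpoly_succ hq' hmn.le _ (by omega)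
  · exact PsiMap_gpoly_succ hq' hmn.le _ (by omega)
end
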